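/- arXiv:2008.12064 — 2 statements merged into one kernel-verified Lean document; each statement's English description precedes it below -/
import Mathlib

section
/- Let u, v, ψ̃ be unit vectors in a complex Hilbert space, and let f, c ∈ [0,1] with f ≤ c. If |⟨u|v⟩| ≤ f and |⟨v|ψ̃⟩| ≥ c, then |⟨u|ψ̃⟩| ≤ f·c + √(1−f²)·√(1−c²). -/
/-! Splitting `u` and `ψ̃` into components along `v` and orthogonal to `v`, and applying
Cauchy–Schwarz to the orthogonal parts, gives `|⟨u|ψ̃⟩| ≤ a b + √(1 - a²) √(1 - b²)` with
`a = |⟨u|v⟩|`, `b = |⟨v|ψ̃⟩|`. The right side is `cos (arccos a - arccos b)`; raising `a` to `f` and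
lowering `b` to `c` shrinks this angle, which stays in `[0, π]` because `f ≤ c`, so the cosine
grows. -/

open Real

theorem cos_arccos_sub_arccos {x y : ℝ} (hx₁ : -1 ≤ x) (hx₂ : x ≤ 1) (hy₁ : -1 ≤ y) (hy₂ : y ≤ 1) :
    cos (arccos x - arccos y) = x * y + √(1 - x ^ 2) * √(1 - y ^ 2) := by
  rw [cos_sub, cos_arccos hx₁ hx₂, cos_arccos hy₁ hy₂, sin_arccos, sin_arccos]

theorem mul_add_sqrt_mul_sqrt_le {a b f c : ℝ} (ha : -1 ≤ a) (haf : a ≤ f) (hfc : f ≤ c)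
    (hcb : c ≤ b) (hb : b ≤ 1) :
    a * b + √(1 - a ^ 2) * √(1 - b ^ 2) ≤ f * c + √(1 - f ^ 2) * √(1 - c ^ 2) := by
  rw [← cos_arccos_sub_arccos ha (by linarith) (by linarith) hb,
    ← cos_arccos_sub_arccos (by linarith) (by linarith) (by linarith) (by linarith)]
  have hfc' := arccos_le_arccos hfc
  have haf' := arccos_le_arccos haf
  have hcb' := arccos_le_arccos hcb
  apply cos_le_cos_of_nonneg_of_le_pi (by linarith)
  · linarith [arccos_le_pi a, arccos_nonneg b]
  · linarith

section InnerProduct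

variable {𝕜 E : Type*} [RCLike 𝕜] [NormedAddCommGroup E] [InnerProductSpace 𝕜 E]

local notation "⟪" x ", " y "⟫" => inner 𝕜 x y

theorem norm_sub_inner_smul_sq {v : E} (hv : ‖v‖ = 1) (x : E) :
    ‖x - ⟪v, x⟫ • v‖ ^ 2 = ‖x‖ ^ 2 - ‖⟪v, x⟫‖ ^ 2 := by
  rw [@norm_sub_sq 𝕜, inner_smul_right, norm_smul, hv, ← inner_conj_symm,
    RCLike.conj_mul, RCLike.norm_conj]
  simp only [RCLike.re_ofReal_pow, mul_one]
  ring

theorem inner_eq_mul_add_inner_sub {v : E} (hv : ‖v‖ = 1) (x y : E) :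
    ⟪x, y⟫ = ⟪x, v⟫ * ⟪v, y⟫ + ⟪x - ⟪v, x⟫ • v, y - ⟪v, y⟫ • v⟫ := by
  have hvv : ⟪v, v⟫ = 1 := by rw [inner_self_eq_norm_sq_to_K, hv]; norm_num
  simp only [inner_sub_left, inner_sub_right, inner_smul_left, inner_smul_right, hvv,
    inner_conj_symm]
  ring

theorem norm_inner_le_of_norm_eq_one {v : E} (hv : ‖v‖ = 1) (x y : E) :
    ‖⟪x, y⟫‖ ≤ ‖⟪x, v⟫‖ * ‖⟪v, y⟫‖ +
      √(‖x‖ ^ 2 - ‖⟪x, v⟫‖ ^ 2) * √(‖y‖ ^ 2 - ‖⟪v, y⟫‖ ^ 2) := by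
  have hx : ‖x - ⟪v, x⟫ • v‖ = √(‖x‖ ^ 2 - ‖⟪x, v⟫‖ ^ 2) := by
    rw [norm_inner_symm x v, ← norm_sub_inner_smul_sq hv, sqrt_sq (norm_nonneg _)]
  have hy : ‖y - ⟪v, y⟫ • v‖ = √(‖y‖ ^ 2 - ‖⟪v, y⟫‖ ^ 2) := by
    rw [← norm_sub_inner_smul_sq hv, sqrt_sq (norm_nonneg _)]
  calc ‖⟪x, y⟫‖ ≤ ‖⟪x, v⟫ * ⟪v, y⟫‖ + ‖⟪x - ⟪v, x⟫ • v, y - ⟪v, y⟫ • v⟫‖ := by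
        rw [inner_eq_mul_add_inner_sub hv x y]; exact norm_add_le _ _
    _ ≤ _ := by
        rw [norm_mul, ← hx, ← hy]
        exact add_le_add_right (norm_inner_le_norm _ _) _

end InnerProduct

theorem stmt_4_general {H : Type*} [NormedAddCommGroup H] [InnerProductSpace ℂ H]
    (u v ψt : H) (hu : ‖u‖ = 1) (hv : ‖v‖ = 1) (hψ : ‖ψt‖ = 1)
    (f c : ℝ) (hfc : f ≤ c)
    (h1 : ‖(inner ℂ u v : ℂ)‖ ≤ f) (h2 : c ≤ ‖(inner ℂ v ψt : ℂ)‖) :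
    ‖(inner ℂ u ψt : ℂ)‖ ≤ f * c + Real.sqrt (1 - f ^ 2) * Real.sqrt (1 - c ^ 2) := by
  have hvψ : ‖(inner ℂ v ψt : ℂ)‖ ≤ 1 := by
    simpa [hv, hψ] using norm_inner_le_norm (𝕜 := ℂ) v ψt
  calc ‖(inner ℂ u ψt : ℂ)‖
      ≤ ‖(inner ℂ u v : ℂ)‖ * ‖(inner ℂ v ψt : ℂ)‖ +
          √(1 - ‖(inner ℂ u v : ℂ)‖ ^ 2) * √(1 - ‖(inner ℂ v ψt : ℂ)‖ ^ 2) := by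
        simpa [hu, hψ] using norm_inner_le_of_norm_eq_one hv u ψt
    _ ≤ f * c + √(1 - f ^ 2) * √(1 - c ^ 2) :=
        mul_add_sqrt_mul_sqrt_le (by linarith [norm_nonneg (inner ℂ u v : ℂ)]) h1 hfc h2 hvψ

theorem stmt_4 {H : Type*} [NormedAddCommGroup H] [InnerProductSpace ℂ H]
    (u v ψt : H) (hu : ‖u‖ = 1) (hv : ‖v‖ = 1) (hψ : ‖ψt‖ = 1)
    (f c : ℝ) (hf0 : 0 ≤ f) (hc1 : c ≤ 1) (hfc : f ≤ c)
    (h1 : ‖(inner ℂ u v : ℂ)‖ ≤ f) (h2 : c ≤ ‖(inner ℂ v ψt : ℂ)‖) :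
    ‖(inner ℂ u ψt : ℂ)‖ ≤ f * c + Real.sqrt (1 - f ^ 2) * Real.sqrt (1 - c ^ 2) :=
  stmt_4_general u v ψt hu hv hψ f c hfc h1 h2
end

section
/- Main GME lower bound: Let ρ be a density operator on a finite-dimensional tensor-product Hilbert space H₁ ⊗ ... ⊗ Hₙ with top eigenvalue a₁ > 0 and top eigenvector ψ₁. Suppose F̂ ∈ [0,1] satisfies ⟨φ|ρ|φ⟩ ≤ F̂² for every product unit vector φ, and F̂ ≤ a₁. Define the geometric measure of entanglement of a pure unit state ψ as E_G(ψ) = 1 − sup_{φ product unit vector} |⟨φ|ψ⟩|², and for mixed ρ as the convex-roof: E_G(ρ) = inf over ensemble decompositions ρ = Σⱼ ãⱼ|ψ̃ⱼ⟩⟨ψ̃ⱼ| of Σⱼ ãⱼ E_G(ψ̃ⱼ). Then for every c ∈ [F̂/√a₁, √a₁] with c² < 1: E_G(ρ) ≥ ((a₁ − c²)/(1 − c²)) · (1 − ((F̂/√a₁)·c + √(1 − F̂²/a₁)·√(1 − c²))²). -/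
/-!
Split an ensemble `ρ = ∑ wⱼ |ψⱼ⟩⟨ψⱼ|` according to whether `‖⟪ψ₁, ψⱼ⟫‖ ≥ c`. Since
`a₁ = ⟪ψ₁, ρ ψ₁⟫ = ∑ wⱼ ‖⟪ψ₁, ψⱼ⟫‖²` and every overlap is at most `1`, the reverse Markov
inequality gives the high-overlap part weight at least `(a₁ - c²) / (1 - c²)`. A product state `φ`
satisfies `a₁ ‖⟪ψ₁, φ⟫‖² ≤ ⟪φ, ρ φ⟫ ≤ F²`, so it is at Fubini–Study angle at least
`arccos (F / √a₁)` from `ψ₁`, while a high-overlap `ψⱼ` is within angle `arccos c`; the triangle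
inequality for angles bounds `‖⟪φ, ψⱼ⟫‖` and hence `E_G(ψⱼ)` from below. The low-overlap part
contributes nonnegatively.
-/

noncomputable section

/-- The set of product unit vectors in `EuclideanSpace ℂ (∀ i, Fin (d i))`,
i.e. unit vectors of the form `φ₁ ⊗ ... ⊗ φₙ`. -/
def prodSet {n : ℕ} (d : Fin n → ℕ) : Set (EuclideanSpace ℂ (∀ i, Fin (d i))) :=
  {φ | ‖φ‖ = 1 ∧ ∃ f : ∀ i, Fin (d i) → ℂ, ∀ x, φ x = ∏ i, f i (x i)}

/-- Geometric measure of entanglement of a pure state. -/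
def egPure {n : ℕ} (d : Fin n → ℕ) (ψ : EuclideanSpace ℂ (∀ i, Fin (d i))) : ℝ :=
  1 - sSup {r : ℝ | ∃ φ ∈ prodSet d, r = ‖(inner ℂ φ ψ : ℂ)‖ ^ 2}

/-- The rank-one operator `|ψ⟩⟨ψ|`. -/
def rankOne {n : ℕ} (d : Fin n → ℕ) (ψ : EuclideanSpace ℂ (∀ i, Fin (d i))) :
    EuclideanSpace ℂ (∀ i, Fin (d i)) →L[ℂ] EuclideanSpace ℂ (∀ i, Fin (d i)) :=
  (innerSL ℂ ψ).smulRight ψ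

/-- Geometric measure of entanglement of a mixed state, via the convex roof. -/
def egMixed {n : ℕ} (d : Fin n → ℕ)
    (ρ : EuclideanSpace ℂ (∀ i, Fin (d i)) →L[ℂ] EuclideanSpace ℂ (∀ i, Fin (d i))) : ℝ :=
  sInf {r : ℝ | ∃ (m : ℕ) (w : Fin m → ℝ) (ψ : Fin m → EuclideanSpace ℂ (∀ i, Fin (d i))),
    (∀ j, 0 ≤ w j) ∧ (∑ j, w j = 1) ∧ (∀ j, ‖ψ j‖ = 1) ∧
    ρ = ∑ j, ((w j : ℂ) • rankOne d (ψ j)) ∧ r = ∑ j, w j * egPure d (ψ j)}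

open scoped InnerProductSpace ComplexConjugate
open RCLike Finset

section InnerProduct

variable {𝕜 E : Type*} [RCLike 𝕜] [NormedAddCommGroup E] [InnerProductSpace 𝕜 E]

lemma inner_sub_inner_smul_self_eq_zero {u : E} (hu : ‖u‖ = 1) (x : E) :
    ⟪u, x - ⟪u, x⟫_𝕜 • u⟫_𝕜 = 0 := by
  rw [inner_sub_right, inner_smul_right, inner_self_eq_one_of_norm_eq_one hu, mul_one, sub_self]

lemma norm_sub_inner_smul_self {u x : E} (hu : ‖u‖ = 1) (hx : ‖x‖ = 1) :
    ‖x - ⟪u, x⟫_𝕜 • u‖ = √(1 - ‖⟪u, x⟫_𝕜‖ ^ 2) := by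
  have hsq : ‖x - ⟪u, x⟫_𝕜 • u‖ ^ 2 = 1 - ‖⟪u, x⟫_𝕜‖ ^ 2 := by
    rw [norm_sub_sq (𝕜 := 𝕜), inner_smul_right, ← inner_conj_symm x u, RCLike.mul_conj,
      norm_smul, hu, hx, ← RCLike.ofReal_pow, RCLike.ofReal_re]
    ring
  rw [← hsq, Real.sqrt_sq (norm_nonneg _)]

lemma inner_eq_conj_mul_add_inner_sub {u : E} (hu : ‖u‖ = 1) (φ ψ : E) :
    ⟪φ, ψ⟫_𝕜 = conj ⟪u, φ⟫_𝕜 * ⟪u, ψ⟫_𝕜 + ⟪φ - ⟪u, φ⟫_𝕜 • u, ψ - ⟪u, ψ⟫_𝕜 • u⟫_𝕜 := by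
  simp only [inner_sub_left, inner_sub_right, inner_smul_left, inner_smul_right,
    inner_self_eq_one_of_norm_eq_one hu, ← inner_conj_symm φ u]
  ring

/-- Triangle inequality for the Fubini–Study distance `arccos ‖⟪·, ·⟫‖` on unit vectors, in
cosine form. -/
theorem norm_inner_le_fubiniStudy {u φ ψ : E} (hu : ‖u‖ = 1) (hφ : ‖φ‖ = 1) (hψ : ‖ψ‖ = 1) :
    ‖⟪φ, ψ⟫_𝕜‖ ≤ ‖⟪u, φ⟫_𝕜‖ * ‖⟪u, ψ⟫_𝕜‖
      + √(1 - ‖⟪u, φ⟫_𝕜‖ ^ 2) * √(1 - ‖⟪u, ψ⟫_𝕜‖ ^ 2) := by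
  rw [inner_eq_conj_mul_add_inner_sub hu, ← norm_sub_inner_smul_self hu hφ,
    ← norm_sub_inner_smul_self hu hψ]
  refine (norm_add_le _ _).trans (add_le_add ?_ (norm_inner_le_norm _ _))
  rw [norm_mul, RCLike.norm_conj]

lemma norm_inner_le_one_of_norm_eq_one {x y : E} (hx : ‖x‖ = 1) (hy : ‖y‖ = 1) :
    ‖⟪x, y⟫_𝕜‖ ≤ 1 := by
  simpa [hx, hy] using norm_inner_le_norm (𝕜 := 𝕜) x y

/-- The orthogonal complement of the eigenvector `u` is `T`-invariant, so `⟪φ, T φ⟫` splits into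
the contribution `a ‖⟪u, φ⟫‖²` of `u` and a nonnegative remainder. -/
lemma LinearMap.IsPositive.mul_norm_inner_sq_le_re_inner_map_self {T : E →ₗ[𝕜] E}
    (hT : T.IsPositive) {a : ℝ} {u : E} (hu : ‖u‖ = 1) (hTu : T u = (a : 𝕜) • u) (φ : E) :
    a * ‖⟪u, φ⟫_𝕜‖ ^ 2 ≤ re ⟪φ, T φ⟫_𝕜 := by
  set α := ⟪u, φ⟫_𝕜
  set v := φ - α • u
  have huv : ⟪u, v⟫_𝕜 = 0 := inner_sub_inner_smul_self_eq_zero hu φ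
  have hvu : ⟪v, u⟫_𝕜 = 0 := by rw [← inner_conj_symm, huv, map_zero]
  have huTv : ⟪u, T v⟫_𝕜 = 0 := by
    rw [← hT.isSymmetric u v, hTu, inner_smul_left, huv, mul_zero]
  have hφ : φ = α • u + v := by simp [v]
  have hexpand : ⟪φ, T φ⟫_𝕜 = ((a * ‖α‖ ^ 2 : ℝ) : 𝕜) + ⟪v, T v⟫_𝕜 := by
    rw [hφ, map_add, map_smul, hTu]
    simp only [inner_add_left, inner_add_right, inner_smul_left, inner_smul_right,
      inner_self_eq_one_of_norm_eq_one hu, huTv, hvu]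
    rw [ofReal_mul, ofReal_pow, ← RCLike.conj_mul]
    ring
  rw [hexpand, map_add, ofReal_re]
  linarith [hT.re_inner_nonneg_right v]

lemma LinearMap.IsPositive.norm_inner_le_div_sqrt {T : E →ₗ[𝕜] E} (hT : T.IsPositive) {a : ℝ}
    (ha : 0 < a) {u : E} (hu : ‖u‖ = 1) (hTu : T u = (a : 𝕜) • u) {F : ℝ} (hF : 0 ≤ F) {φ : E}
    (hφ : re ⟪φ, T φ⟫_𝕜 ≤ F ^ 2) : ‖⟪u, φ⟫_𝕜‖ ≤ F / √a := by
  have := (hT.mul_norm_inner_sq_le_re_inner_map_self hu hTu φ).trans hφ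
  rw [le_div_iff₀ (Real.sqrt_pos.2 ha), ← sq_le_sq₀ (by positivity) hF, mul_pow,
    Real.sq_sqrt ha.le]
  linarith

lemma inner_sum_smul_rankOne_self_apply {ι : Type*} [Fintype ι] (w : ι → ℝ) (ψ : ι → E)
    (v : E) :
    ⟪v, (∑ j, (w j : 𝕜) • InnerProductSpace.rankOne 𝕜 (ψ j) (ψ j)) v⟫_𝕜 =
      ((∑ j, w j * ‖⟪v, ψ j⟫_𝕜‖ ^ 2 : ℝ) : 𝕜) := by
  simp only [_root_.sum_apply, smul_apply, InnerProductSpace.rankOne_apply, inner_sum,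
    inner_smul_right]
  push_cast
  refine sum_congr rfl fun j _ => ?_
  rw [← inner_conj_symm v (ψ j), RCLike.mul_conj, RCLike.norm_conj]

lemma ContinuousLinearMap.IsPositive.exists_eq_sum_smul_rankOne [FiniteDimensional 𝕜 E]
    {T : E →L[𝕜] E} (hT : T.IsPositive) (htr : LinearMap.trace 𝕜 E T = 1) :
    ∃ (m : ℕ) (w : Fin m → ℝ) (ψ : Fin m → E), (∀ j, 0 ≤ w j) ∧ ∑ j, w j = 1 ∧
      (∀ j, ‖ψ j‖ = 1) ∧ T = ∑ j, (w j : 𝕜) • InnerProductSpace.rankOne 𝕜 (ψ j) (ψ j) := by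
  have hsymm := hT.isSymmetric
  set b := hsymm.eigenvectorBasis rfl
  refine ⟨_, hsymm.eigenvalues rfl, b, hT.toLinearMap.nonneg_eigenvalues rfl,
    ?_, b.orthonormal.1, ?_⟩
  · exact_mod_cast (hsymm.trace_eq_sum_eigenvalues rfl).symm.trans htr
  · ext v
    conv_lhs => rw [← b.sum_repr' v]
    simp only [map_sum, map_smul, _root_.sum_apply, smul_apply,
      InnerProductSpace.rankOne_apply]
    refine sum_congr rfl fun i _ => ?_
    rw [← ContinuousLinearMap.coe_coe, hsymm.apply_eigenvectorBasis, smul_smul, smul_smul,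
      mul_comm]

end InnerProduct

namespace Real

lemma mul_add_sqrt_mul_sqrt_eq_cos_arccos_sub {x y : ℝ} (hx₁ : -1 ≤ x) (hx₂ : x ≤ 1)
    (hy₁ : -1 ≤ y) (hy₂ : y ≤ 1) :
    x * y + √(1 - x ^ 2) * √(1 - y ^ 2) = cos (arccos x - arccos y) := by
  rw [cos_sub, cos_arccos hx₁ hx₂, cos_arccos hy₁ hy₂, sin_arccos, sin_arccos]

lemma abs_mul_add_sqrt_mul_sqrt_le_one {x y : ℝ} (hx₁ : -1 ≤ x) (hx₂ : x ≤ 1)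
    (hy₁ : -1 ≤ y) (hy₂ : y ≤ 1) :
    |x * y + √(1 - x ^ 2) * √(1 - y ^ 2)| ≤ 1 := by
  rw [mul_add_sqrt_mul_sqrt_eq_cos_arccos_sub hx₁ hx₂ hy₁ hy₂]
  exact abs_cos_le_one _

/-- With `x = cos α`, `y = cos β`, the left side is `cos (α - β)`; shrinking the interval
`[x, y]` shrinks the angle `α - β ∈ [0, π]`. -/
lemma mul_add_sqrt_mul_sqrt_le_of_le {x x' y' y : ℝ} (hx : -1 ≤ x) (hxx' : x ≤ x')
    (hx'y' : x' ≤ y') (hy'y : y' ≤ y) (hy : y ≤ 1) :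
    x * y + √(1 - x ^ 2) * √(1 - y ^ 2) ≤ x' * y' + √(1 - x' ^ 2) * √(1 - y' ^ 2) := by
  rw [mul_add_sqrt_mul_sqrt_eq_cos_arccos_sub hx (by linarith) (by linarith) hy,
    mul_add_sqrt_mul_sqrt_eq_cos_arccos_sub (by linarith) (by linarith) (by linarith)
      (by linarith)]
  have := arccos_le_arccos hxx'
  have := arccos_le_arccos hx'y'
  have := arccos_le_arccos hy'y
  have := arccos_le_pi x
  have := arccos_nonneg y
  exact cos_le_cos_of_nonneg_of_le_pi (by linarith) (by linarith) (by linarith)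

end Real

/-- Reverse Markov inequality. -/
lemma sum_mul_sub_div_le_sum_filter_le {ι : Type*} [Fintype ι] (w g : ι → ℝ) {t : ℝ}
    (hw : ∀ j, 0 ≤ w j) (hw₁ : ∑ j, w j = 1) (hg : ∀ j, g j ≤ 1) (ht : t < 1) :
    (∑ j, w j * g j - t) / (1 - t) ≤ ∑ j ∈ univ.filter (fun j => t ≤ g j), w j := by
  classical
  set μ := ∑ j ∈ univ.filter (fun j => t ≤ g j), w j
  have hrest : ∑ j ∈ univ.filter (fun j => ¬ t ≤ g j), w j = 1 - μ := by
    rw [← hw₁, ← sum_filter_add_sum_filter_not univ (fun j => t ≤ g j)]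
    ring
  have hhigh : ∑ j ∈ univ.filter (fun j => t ≤ g j), w j * g j ≤ μ :=
    sum_le_sum fun j _ => mul_le_of_le_one_right (hw j) (hg j)
  have hlow : ∑ j ∈ univ.filter (fun j => ¬ t ≤ g j), w j * g j ≤ (1 - μ) * t := by
    rw [← hrest, sum_mul]
    exact sum_le_sum fun j hj =>
      mul_le_mul_of_nonneg_left (not_le.mp (mem_filter.mp hj).2).le (hw j)
  rw [div_le_iff₀ (by linarith), ← sum_filter_add_sum_filter_not univ (fun j => t ≤ g j)]
  nlinarith

lemma sum_filter_mul_le_sum_mul {ι : Type*} [Fintype ι] (p : ι → Prop) [DecidablePred p]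
    (w e : ι → ℝ) {B : ℝ} (hw : ∀ j, 0 ≤ w j) (he : ∀ j, 0 ≤ e j) (hB : ∀ j, p j → B ≤ e j) :
    (∑ j ∈ univ.filter p, w j) * B ≤ ∑ j, w j * e j := by
  rw [sum_mul]
  calc ∑ j ∈ univ.filter p, w j * B ≤ ∑ j ∈ univ.filter p, w j * e j :=
        sum_le_sum fun j hj => mul_le_mul_of_nonneg_left (hB j (mem_filter.mp hj).2) (hw j)
    _ ≤ ∑ j, w j * e j :=
        sum_le_sum_of_subset_of_nonneg (subset_univ _) fun j _ _ => mul_nonneg (hw j) (he j)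

lemma one_sub_sq_le_egPure {n : ℕ} {d : Fin n → ℕ} {ψ : EuclideanSpace ℂ (∀ i, Fin (d i))}
    {K : ℝ} (hK : ∀ φ ∈ prodSet d, ‖⟪φ, ψ⟫_ℂ‖ ≤ K) : 1 - K ^ 2 ≤ egPure d ψ := by
  have : sSup {r : ℝ | ∃ φ ∈ prodSet d, r = ‖⟪φ, ψ⟫_ℂ‖ ^ 2} ≤ K ^ 2 := by
    refine Real.sSup_le ?_ (sq_nonneg K)
    rintro r ⟨φ, hφ, rfl⟩
    exact pow_le_pow_left₀ (norm_nonneg _) (hK φ hφ) 2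
  unfold egPure
  linarith

lemma egPure_nonneg {n : ℕ} {d : Fin n → ℕ} {ψ : EuclideanSpace ℂ (∀ i, Fin (d i))}
    (hψ : ‖ψ‖ = 1) : 0 ≤ egPure d ψ := by
  simpa using one_sub_sq_le_egPure fun φ hφ => norm_inner_le_one_of_norm_eq_one hφ.1 hψ

lemma one_sub_sq_le_egPure_of_le_norm_inner {n : ℕ} {d : Fin n → ℕ}
    {ψ₁ ψ : EuclideanSpace ℂ (∀ i, Fin (d i))} (hψ₁ : ‖ψ₁‖ = 1) (hψ : ‖ψ‖ = 1) {x c : ℝ}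
    (hx : ∀ φ ∈ prodSet d, ‖⟪ψ₁, φ⟫_ℂ‖ ≤ x) (hxc : x ≤ c) (hc : c ≤ ‖⟪ψ₁, ψ⟫_ℂ‖) :
    1 - (x * c + √(1 - x ^ 2) * √(1 - c ^ 2)) ^ 2 ≤ egPure d ψ :=
  one_sub_sq_le_egPure fun φ hφ =>
    (norm_inner_le_fubiniStudy hψ₁ hφ.1 hψ).trans <|
      Real.mul_add_sqrt_mul_sqrt_le_of_le (by linarith [norm_nonneg ⟪ψ₁, φ⟫_ℂ]) (hx φ hφ) hxc
        hc (norm_inner_le_one_of_norm_eq_one hψ₁ hψ)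

theorem stmt_6_general {n : ℕ} (d : Fin n → ℕ)
    (ρ : EuclideanSpace ℂ (∀ i, Fin (d i)) →L[ℂ] EuclideanSpace ℂ (∀ i, Fin (d i)))
    (hself : IsSelfAdjoint ρ)
    (hpos : ∀ v, 0 ≤ ((inner ℂ v (ρ v) : ℂ)).re)
    (htrace : LinearMap.trace ℂ _ (ρ : EuclideanSpace ℂ (∀ i, Fin (d i)) →ₗ[ℂ]
      EuclideanSpace ℂ (∀ i, Fin (d i))) = 1)
    (a₁ : ℝ) (ψ₁ : EuclideanSpace ℂ (∀ i, Fin (d i)))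
    (ha : 0 < a₁) (hψ₁ : ‖ψ₁‖ = 1) (heig : ρ ψ₁ = (a₁ : ℂ) • ψ₁)
    (F : ℝ) (hF : F ∈ Set.Icc (0 : ℝ) 1)
    (hover : ∀ φ ∈ prodSet d, ((inner ℂ φ (ρ φ) : ℂ)).re ≤ F ^ 2)
    (c : ℝ) (hc1 : F / Real.sqrt a₁ ≤ c) (hc3 : c ^ 2 < 1) :
    ((a₁ - c ^ 2) / (1 - c ^ 2)) *
        (1 - (F / Real.sqrt a₁ * c
          + Real.sqrt (1 - F ^ 2 / a₁) * Real.sqrt (1 - c ^ 2)) ^ 2)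
      ≤ egMixed d ρ := by
  have hρ : ρ.IsPositive :=
    ⟨hself.isSymmetric, fun v => by rw [ρ.reApplyInnerSelf_apply, inner_re_symm]; exact hpos v⟩
  set x := F / √a₁
  have hx0 : 0 ≤ x := div_nonneg hF.1 (Real.sqrt_nonneg a₁)
  rw [show F ^ 2 / a₁ = x ^ 2 by rw [div_pow, Real.sq_sqrt ha.le]]
  have hprod : ∀ φ ∈ prodSet d, ‖⟪ψ₁, φ⟫_ℂ‖ ≤ x := fun φ hφ =>
    hρ.toLinearMap.norm_inner_le_div_sqrt ha hψ₁ heig hF.1 (hover φ hφ)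
  have hK : 0 ≤ 1 - (x * c + √(1 - x ^ 2) * √(1 - c ^ 2)) ^ 2 := by
    rw [sub_nonneg, sq_le_one_iff_abs_le_one]
    obtain ⟨hc₁, hc₂⟩ := abs_le.mp ((sq_le_one_iff_abs_le_one c).mp hc3.le)
    exact Real.abs_mul_add_sqrt_mul_sqrt_le_one (by linarith) (by linarith) hc₁ hc₂
  refine le_csInf ?_ ?_
  · obtain ⟨m, w, ψ, hw, hw₁, hψ, hdec⟩ := hρ.exists_eq_sum_smul_rankOne htrace
    exact ⟨_, m, w, ψ, hw, hw₁, hψ, hdec, rfl⟩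
  rintro r ⟨m, w, ψ, hw, hw₁, hψ, hdec, rfl⟩
  have ha₁ : a₁ = ∑ j, w j * ‖⟪ψ₁, ψ j⟫_ℂ‖ ^ 2 := by
    have hρψ₁ : ⟪ψ₁, ρ ψ₁⟫_ℂ = a₁ := by
      rw [heig, inner_smul_right, inner_self_eq_one_of_norm_eq_one hψ₁, mul_one]
    rw [hdec] at hρψ₁
    exact Complex.ofReal_injective <|
      hρψ₁.symm.trans (inner_sum_smul_rankOne_self_apply w ψ ψ₁)
  have hμ := sum_mul_sub_div_le_sum_filter_le w (fun j => ‖⟪ψ₁, ψ j⟫_ℂ‖ ^ 2) hw hw₁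
    (fun j => pow_le_one₀ (norm_nonneg _) (norm_inner_le_one_of_norm_eq_one hψ₁ (hψ j))) hc3
  rw [← ha₁] at hμ
  refine (mul_le_mul_of_nonneg_right hμ hK).trans <|
    sum_filter_mul_le_sum_mul _ w _ hw (fun j => egPure_nonneg (hψ j)) fun j hj => ?_
  exact one_sub_sq_le_egPure_of_le_norm_inner hψ₁ (hψ j) hprod hc1
    ((sq_le_sq₀ (hx0.trans hc1) (norm_nonneg _)).1 hj)

theorem stmt_6 {n : ℕ} (d : Fin n → ℕ)
    (ρ : EuclideanSpace ℂ (∀ i, Fin (d i)) →L[ℂ] EuclideanSpace ℂ (∀ i, Fin (d i)))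
    (hself : IsSelfAdjoint ρ)
    (hpos : ∀ v, 0 ≤ ((inner ℂ v (ρ v) : ℂ)).re)
    (htrace : LinearMap.trace ℂ _ (ρ : EuclideanSpace ℂ (∀ i, Fin (d i)) →ₗ[ℂ]
      EuclideanSpace ℂ (∀ i, Fin (d i))) = 1)
    (a₁ : ℝ) (ψ₁ : EuclideanSpace ℂ (∀ i, Fin (d i)))
    (ha : 0 < a₁) (hψ₁ : ‖ψ₁‖ = 1) (heig : ρ ψ₁ = (a₁ : ℂ) • ψ₁)
    (htop : ∀ (μ : ℝ) (v : EuclideanSpace ℂ (∀ i, Fin (d i))),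
      v ≠ 0 → ρ v = (μ : ℂ) • v → μ ≤ a₁)
    (F : ℝ) (hF : F ∈ Set.Icc (0 : ℝ) 1) (hFa : F ≤ a₁)
    (hover : ∀ φ ∈ prodSet d, ((inner ℂ φ (ρ φ) : ℂ)).re ≤ F ^ 2)
    (c : ℝ) (hc1 : F / Real.sqrt a₁ ≤ c) (hc2 : c ≤ Real.sqrt a₁) (hc3 : c ^ 2 < 1) :
    ((a₁ - c ^ 2) / (1 - c ^ 2)) *
        (1 - (F / Real.sqrt a₁ * c
          + Real.sqrt (1 - F ^ 2 / a₁) * Real.sqrt (1 - c ^ 2)) ^ 2)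
      ≤ egMixed d ρ :=
  stmt_6_general d ρ hself hpos htrace a₁ ψ₁ ha hψ₁ heig F hF hover c hc1 hc3

end
end
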